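/- A noncommutative pre-Poisson algebra (A,≻,≺,∗) is coherent (i.e. satisfies (x≻y + x≺y)∗z = x∗(y≻z) + y∗(z≺x) for all x,y,z ∈ A) if and only if (x∗y)∘z − x∘(y∗z) = (y∗x)∘z − y∘(x∗z) for all x,y,z ∈ A, where x∘y = x≻y − y≺x. -/
import Mathlib


open LinearMap Module

/-- `(A, succ, prec)` is a dendriform algebra. -/
def IsDendriform (K : Type*) [Field K] {A : Type*} [AddCommGroup A] [Module K A]
    (succ prec : A →ₗ[K] A →ₗ[K] A) : Prop :=
  (∀ x y z, prec (prec x y) z = prec x (succ y z + prec y z)) ∧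
  (∀ x y z, prec (succ x y) z = succ x (prec y z)) ∧
  (∀ x y z, succ x (succ y z) = succ (succ x y + prec x y) z)

/-- `(A, ast)` is a pre-Lie algebra. -/
def IsPreLie (K : Type*) [Field K] {A : Type*} [AddCommGroup A] [Module K A]
    (ast : A →ₗ[K] A →ₗ[K] A) : Prop :=
  ∀ x y z, ast (ast x y) z - ast x (ast y z) = ast (ast y x) z - ast y (ast x z)

/-- `(A, succ, prec, ast)` is a noncommutative pre-Poisson algebra. -/
def IsNCPrePoisson (K : Type*) [Field K] {A : Type*} [AddCommGroup A] [Module K A]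
    (succ prec ast : A →ₗ[K] A →ₗ[K] A) : Prop :=
  IsDendriform K succ prec ∧ IsPreLie K ast ∧
  (∀ x y z, succ (ast x y - ast y x) z = ast x (succ y z) - succ y (ast x z)) ∧
  (∀ x y z, prec x (ast y z - ast z y) = ast y (prec x z) - prec (ast y x) z) ∧
  (∀ x y z, ast (succ x y + prec x y) z = prec (ast x z) y + succ x (ast y z))

/-- A noncommutative pre-Poisson algebra is coherent if
`(x≻y + x≺y)∗z = x∗(y≻z) + y∗(z≺x)`. -/
def IsCoherentNCPrePoisson (K : Type*) [Field K] {A : Type*} [AddCommGroup A]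
    [Module K A] (succ prec ast : A →ₗ[K] A →ₗ[K] A) : Prop :=
  IsNCPrePoisson K succ prec ast ∧
  (∀ x y z, ast (succ x y + prec x y) z = ast x (succ y z) + ast y (prec z x))

/-- a noncommutative pre-Poisson algebra is coherent iff
`(x∗y)∘z - x∘(y∗z) = (y∗x)∘z - y∘(x∗z)` where `x∘y = x≻y - y≺x`. -/
theorem coherent_prePoisson_iff {K A : Type*} [Field K] [CharZero K]
    [AddCommGroup A] [Module K A]
    (succ prec ast : A →ₗ[K] A →ₗ[K] A)
    (h : IsNCPrePoisson K succ prec ast) :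
    (∀ x y z, ast (succ x y + prec x y) z = ast x (succ y z) + ast y (prec z x)) ↔
    (∀ x y z,
      (succ - prec.flip) (ast x y) z - (succ - prec.flip) x (ast y z) =
      (succ - prec.flip) (ast y x) z - (succ - prec.flip) y (ast x z)) := by
  obtain ⟨-, -, hP1, hP2, hP3⟩ := h
  constructor
  · intro hC x y z
    have e1 := hP1 x y z
    have e3 := hP2 z y x
    have eP := hP3 x y z
    have eC := hC x y z
    simp only [map_add, map_sub, LinearMap.add_apply, LinearMap.sub_apply,
      LinearMap.flip_apply] at *
    linear_combination (norm := module) e1 + e3 + eP - eC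
  · intro hR x y z
    have e1 := hP1 x y z
    have e3 := hP2 z y x
    have eP := hP3 x y z
    have eR := hR x y z
    simp only [map_add, map_sub, LinearMap.add_apply, LinearMap.sub_apply,
      LinearMap.flip_apply] at *
    linear_combination (norm := module) e1 + e3 + eP - eR
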